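/- arXiv:1009.0469 — 4 statements merged into one kernel-verified Lean document; each statement's English description precedes it below -/
import Mathlib

section
/- Let Φ be an N-function satisfying the ∇₂-condition, let Ψ be its complementary function, and assume that the function φ₁(t) := t·Ψ^{-1}(t) is convex on [0,∞). Then φ₁ is an admissible N-function; that is, φ₁(t) = 0 iff t = 0, lim_{t→0} φ₁(t)/t = 0, lim_{t→∞} φ₁(t)/t = ∞, and there exists α > 0 such that ∫₀^α φ₁^{-1}(1/s) ds < ∞. -/
open MeasureTheory Filter Set

set_option maxHeartbeats 1000000 in
/-- If `Φ` is an N-function satisfying the `∇₂`-condition, `Ψ` is its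
complementary function, and `φ₁ t = t * Ψ⁻¹ t` is convex on `[0,∞)`, then `φ₁` is an
admissible N-function: `φ₁ t = 0 ↔ t = 0`, `φ₁ t / t → 0` as `t → 0⁺`,
`φ₁ t / t → ∞` as `t → ∞`, and `∫₀^α φ₁⁻¹(1/s) ds < ∞` for some `α > 0`. -/
theorem ground_state_stmt0
    (Φ Ψ Ψinv : ℝ → ℝ)
    -- Φ is an N-function
    (hΦconv : ConvexOn ℝ (Set.Ici 0) Φ)
    (hΦnonneg : ∀ t ≥ (0:ℝ), 0 ≤ Φ t)
    (hΦzero : ∀ t ≥ (0:ℝ), (Φ t = 0 ↔ t = 0))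
    (hΦlim0 : Tendsto (fun t => Φ t / t) (nhdsWithin 0 (Set.Ioi 0)) (nhds 0))
    (hΦtop : Tendsto (fun t => Φ t / t) atTop atTop)
    -- Φ satisfies the ∇₂-condition
    (hnabla2 : ∃ l > (1:ℝ), ∃ t₀ > (0:ℝ), ∀ t ≥ t₀, Φ t ≤ Φ (l * t) / (l * t))
    -- Ψ is the complementary function of Φ
    (hΨ : ∀ r ≥ (0:ℝ), Ψ r = sSup {y : ℝ | ∃ t, 0 ≤ t ∧ y = r * t - Φ t})
    -- Ψinv is the (generalized) inverse of Ψ on [0,∞)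
    (hΨinv : ∀ t ≥ (0:ℝ), 0 ≤ Ψinv t ∧ Ψ (Ψinv t) = t)
    (hΨinv' : ∀ t ≥ (0:ℝ), Ψinv (Ψ t) = t)
    -- φ₁(t) := t * Ψinv (t) is convex on [0,∞)
    (hφ₁conv : ConvexOn ℝ (Set.Ici 0) (fun t => t * Ψinv t)) :
    -- φ₁ is an admissible N-function:
    (∀ t ≥ (0:ℝ), (t * Ψinv t = 0 ↔ t = 0)) ∧
    Tendsto (fun t => (t * Ψinv t) / t) (nhdsWithin 0 (Set.Ioi 0)) (nhds 0) ∧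
    Tendsto (fun t => (t * Ψinv t) / t) atTop atTop ∧
    (∃ φ₁inv : ℝ → ℝ,
      (∀ s ≥ (0:ℝ), φ₁inv (s * Ψinv s) = s) ∧
      (∀ t ≥ (0:ℝ), 0 ≤ φ₁inv t ∧ (φ₁inv t) * Ψinv (φ₁inv t) = t) ∧
      ∃ α > (0:ℝ), IntegrableOn (fun s => φ₁inv (1 / s)) (Set.Ioc 0 α)) := by
  obtain ⟨l, hl, t₀, ht₀, hΔ⟩ := hnabla2
  have hl0 : (0:ℝ) < l := by linarith
  have hΦ0 : Φ 0 = 0 := (hΦzero 0 le_rfl).2 rfl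
  set S : ℝ → Set ℝ := fun r => {y : ℝ | ∃ t, 0 ≤ t ∧ y = r * t - Φ t} with hS
  have hS0 : ∀ r, (0:ℝ) ∈ S r := fun r => ⟨0, le_rfl, by simp [hΦ0]⟩
  have hSne : ∀ r, (S r).Nonempty := fun r => ⟨0, hS0 r⟩
  -- boundedness of the defining set
  have hbdd : ∀ r ≥ (0:ℝ), BddAbove (S r) := by
    intro r hr
    obtain ⟨T, hT⟩ := eventually_atTop.1 ((tendsto_atTop.1 hΦtop) (r + 1))
    refine ⟨r * max T 1, ?_⟩
    rintro y ⟨t, ht, rfl⟩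
    rcases le_or_gt t (max T 1) with h | h
    · have := hΦnonneg t ht
      nlinarith [mul_le_mul_of_nonneg_left h hr]
    · have ht1 : (1:ℝ) ≤ t := le_trans (le_max_right T 1) h.le
      have := hT t (le_trans (le_max_left T 1) h.le)
      have hΦt : (r + 1) * t ≤ Φ t := by
        rw [le_div_iff₀ (by linarith)] at this; linarith [this]
      nlinarith [mul_nonneg hr (le_trans zero_le_one (le_max_right T 1))]
  have hΨnonneg : ∀ r ≥ (0:ℝ), 0 ≤ Ψ r := by
    intro r hr; rw [hΨ r hr]; exact le_csSup (hbdd r hr) (hS0 r)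
  have hΨ0 : Ψ 0 = 0 := by
    refine le_antisymm ?_ (hΨnonneg 0 le_rfl)
    rw [hΨ 0 le_rfl]
    refine csSup_le (hSne 0) ?_
    rintro y ⟨t, ht, rfl⟩
    have := hΦnonneg t ht; linarith
  have hΨmono : ∀ r₁ r₂ : ℝ, 0 ≤ r₁ → r₁ ≤ r₂ → Ψ r₁ ≤ Ψ r₂ := by
    intro r₁ r₂ h1 h12
    rw [hΨ r₁ h1, hΨ r₂ (le_trans h1 h12)]
    refine csSup_le (hSne r₁) ?_
    rintro y ⟨t, ht, rfl⟩
    refine le_trans ?_ (le_csSup (hbdd r₂ (le_trans h1 h12)) ⟨t, ht, rfl⟩)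
    nlinarith [mul_le_mul_of_nonneg_right h12 ht]
  have hΨpos : ∀ r > (0:ℝ), 0 < Ψ r := by
    intro r hr
    have hne : (nhdsWithin (0:ℝ) (Set.Ioi 0)).NeBot := nhdsGT_neBot 0
    have hev : ∀ᶠ t in nhdsWithin (0:ℝ) (Set.Ioi 0), Φ t / t < r / 2 := by
      have := hΦlim0.eventually (eventually_lt_nhds (show (0:ℝ) < r/2 by linarith))
      exact this
    obtain ⟨t, htlt, htmem⟩ := (hev.and eventually_mem_nhdsWithin).exists
    have ht : (0:ℝ) < t := htmem
    have hΦlt : Φ t < (r/2) * t := by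
      rw [div_lt_iff₀ ht] at htlt; linarith
    have : (r/2) * t ≤ Ψ r := by
      rw [hΨ r hr.le]
      refine le_trans ?_ (le_csSup (hbdd r hr.le) ⟨t, ht.le, rfl⟩)
      nlinarith
    nlinarith
  have hΨinv0 : Ψinv 0 = 0 := by
    have := hΨinv' 0 le_rfl; rwa [hΨ0] at this
  have hImono : ∀ a b : ℝ, 0 ≤ a → a ≤ b → Ψinv a ≤ Ψinv b := by
    intro a b ha hab
    by_contra h
    push_neg at h
    have h1 : Ψ (Ψinv b) ≤ Ψ (Ψinv a) :=
      hΨmono _ _ (hΨinv b (le_trans ha hab)).1 h.le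
    rw [(hΨinv b (le_trans ha hab)).2, (hΨinv a ha).2] at h1
    have : a = b := le_antisymm hab h1
    rw [this] at h; exact lt_irrefl _ h
  have hIpos : ∀ t > (0:ℝ), 0 < Ψinv t := by
    intro t ht
    rcases lt_or_eq_of_le (hΨinv t ht.le).1 with h | h
    · exact h
    · exfalso
      have := (hΨinv t ht.le).2
      rw [← h, hΨ0] at this; linarith
  -- Part 1
  have part1 : ∀ t ≥ (0:ℝ), (t * Ψinv t = 0 ↔ t = 0) := by
    intro t ht
    constructor
    · intro h
      by_contra htne
      have htpos : 0 < t := lt_of_le_of_ne ht (Ne.symm htne)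
      nlinarith [hIpos t htpos]
    · intro h; simp [h, hΨinv0]
  -- Part 2
  have part2 : Tendsto (fun t => (t * Ψinv t) / t) (nhdsWithin 0 (Set.Ioi 0)) (nhds 0) := by
    have heq : ∀ᶠ t in nhdsWithin (0:ℝ) (Set.Ioi 0), (t * Ψinv t) / t = Ψinv t := by
      filter_upwards [self_mem_nhdsWithin] with t ht
      exact mul_div_cancel_left₀ _ (ne_of_gt ht)
    rw [tendsto_congr' heq, tendsto_order]
    constructor
    · intro a ha
      filter_upwards [self_mem_nhdsWithin] with t ht
      exact lt_of_lt_of_le ha (hΨinv t (le_of_lt ht)).1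
    · intro b hb
      have hδ : 0 < Ψ (b/2) := hΨpos _ (by linarith)
      filter_upwards [Ioo_mem_nhdsGT_of_mem (⟨le_rfl, hδ⟩ : (0:ℝ) ∈ Ico 0 (Ψ (b/2)))] with t ht
      have : Ψinv t ≤ Ψinv (Ψ (b/2)) := hImono _ _ ht.1.le ht.2.le
      rw [hΨinv' (b/2) (by linarith)] at this
      linarith
  -- Part 3
  have hItop : Tendsto Ψinv atTop atTop := by
    rw [tendsto_atTop]
    intro M
    filter_upwards [eventually_ge_atTop (Ψ (max M 0))] with t ht
    have h1 : Ψinv (Ψ (max M 0)) ≤ Ψinv t :=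
      hImono _ _ (hΨnonneg _ (le_max_right M 0)) ht
    rw [hΨinv' _ (le_max_right M 0)] at h1
    exact le_trans (le_max_left M 0) h1
  have part3 : Tendsto (fun t => (t * Ψinv t) / t) atTop atTop := by
    refine hItop.congr' ?_
    filter_upwards [eventually_gt_atTop (0:ℝ)] with t ht
    exact (mul_div_cancel_left₀ _ (ne_of_gt ht)).symm
  refine ⟨part1, part2, part3, ?_⟩
  -- strict monotonicity of φ₁
  have hφsmono : ∀ a b : ℝ, 0 ≤ a → a < b → a * Ψinv a < b * Ψinv b := by
    intro a b ha hab
    have hb : 0 < b := lt_of_le_of_lt ha hab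
    have h1 : Ψinv a ≤ Ψinv b := hImono a b ha hab.le
    have h2 : 0 < Ψinv b := hIpos b hb
    nlinarith
  -- unboundedness of φ₁
  have hφunbdd : ∀ t : ℝ, ∃ s, 0 ≤ s ∧ t ≤ s * Ψinv s := by
    intro t
    set s := max 1 (t / Ψinv 1) with hs
    have hs1 : (1:ℝ) ≤ s := le_max_left _ _
    have hs0 : (0:ℝ) ≤ s := by linarith
    have hI1 : 0 < Ψinv 1 := hIpos 1 one_pos
    have h2 : Ψinv 1 ≤ Ψinv s := hImono 1 s zero_le_one hs1
    refine ⟨s, hs0, ?_⟩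
    have h3 : t / Ψinv 1 ≤ s := le_max_right _ _
    have h4 : t ≤ s * Ψinv 1 := by
      rw [div_le_iff₀ hI1] at h3; linarith
    nlinarith
  -- continuity of φ₁ on [0, ∞)
  have hφcont : ContinuousOn (fun t => t * Ψinv t) (Ici (0:ℝ)) := by
    have hint : ContinuousOn (fun t => t * Ψinv t) (Ioi (0:ℝ)) := by
      have := hφ₁conv.continuousOn_interior
      rwa [interior_Ici] at this
    intro x hx
    rcases eq_or_lt_of_le (Set.mem_Ici.mp hx) with h | h
    · -- continuity at 0 within Ici 0 by squeeze
      subst h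
      have key : Tendsto (fun t => t * Ψinv t) (nhdsWithin 0 (Ici (0:ℝ))) (nhds 0) := by
        have hb : ∀ᶠ t in nhdsWithin (0:ℝ) (Ici 0), t * Ψinv t ≤ t * Ψinv 1 := by
          filter_upwards [Ico_mem_nhdsGE_of_mem (⟨le_rfl, one_pos⟩ : (0:ℝ) ∈ Ico 0 1)] with t ht
          exact mul_le_mul_of_nonneg_left (hImono t 1 ht.1 ht.2.le) ht.1
        have h0 : ∀ᶠ t in nhdsWithin (0:ℝ) (Ici 0), 0 ≤ t * Ψinv t := by
          filter_upwards [self_mem_nhdsWithin] with t ht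
          exact mul_nonneg ht (hΨinv t ht).1
        have hg : Tendsto (fun t : ℝ => t * Ψinv 1) (nhdsWithin 0 (Ici (0:ℝ))) (nhds 0) := by
          have h := (continuous_mul_right (Ψinv 1)).tendsto (0:ℝ)
          rw [zero_mul] at h
          exact h.mono_left nhdsWithin_le_nhds
        exact squeeze_zero' h0 hb hg
      have : (fun t : ℝ => t * Ψinv t) 0 = 0 := by simp
      unfold ContinuousWithinAt
      rw [this]
      exact key
    · exact ((hint.continuousAt (Ioi_mem_nhds h)).continuousWithinAt)
  -- surjectivity of φ₁ onto [0,∞)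
  have hφsurj : ∀ t ≥ (0:ℝ), ∃ s, 0 ≤ s ∧ s * Ψinv s = t := by
    intro t ht
    obtain ⟨B, hB0, hBt⟩ := hφunbdd t
    have h0 : (fun t => t * Ψinv t) 0 = 0 := by simp
    have hsub : Icc (0:ℝ) B ⊆ Ici 0 := fun x hx => hx.1
    have := intermediate_value_Icc hB0 (hφcont.mono hsub)
    have htmem : t ∈ Icc ((fun t => t * Ψinv t) 0) ((fun t => t * Ψinv t) B) := by
      rw [h0]; exact ⟨ht, hBt⟩
    obtain ⟨s, hsmem, hst⟩ := this htmem
    exact ⟨s, hsmem.1, hst⟩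
  -- define the inverse
  set I : ℝ → Set ℝ := fun t => {s : ℝ | 0 ≤ s ∧ t ≤ s * Ψinv s} with hI
  set φ₁inv : ℝ → ℝ := fun t => sInf (I t) with hφ₁inv
  have hIbdd : ∀ t, BddBelow (I t) := fun t => ⟨0, fun s hs => hs.1⟩
  have hIne : ∀ t, (I t).Nonempty := by
    intro t; obtain ⟨s, hs0, hst⟩ := hφunbdd t; exact ⟨s, hs0, hst⟩
  have hleft : ∀ s ≥ (0:ℝ), φ₁inv (s * Ψinv s) = s := by
    intro s hs
    refine le_antisymm (csInf_le (hIbdd _) ⟨hs, le_rfl⟩) ?_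
    refine le_csInf ⟨s, hs, le_rfl⟩ ?_
    rintro s' ⟨hs', hle⟩
    by_contra h
    push_neg at h
    exact absurd hle (not_le.2 (hφsmono s' s hs' h))
  have hright : ∀ t ≥ (0:ℝ), 0 ≤ φ₁inv t ∧ (φ₁inv t) * Ψinv (φ₁inv t) = t := by
    intro t ht
    obtain ⟨s, hs0, hst⟩ := hφsurj t ht
    rw [← hst, hleft s hs0]
    exact ⟨hs0, rfl⟩
  have hinvmono : Monotone φ₁inv := by
    intro t₁ t₂ h
    exact csInf_le_csInf (hIbdd _) (hIne _) (fun s hs => ⟨hs.1, le_trans h hs.2⟩)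
  refine ⟨φ₁inv, hleft, hright, ?_⟩
  -- GROWTH ESTIMATES
  -- slope monotonicity
  have hslope : ∀ a b : ℝ, 0 < a → a ≤ b → Φ a / a ≤ Φ b / b := by
    intro a b ha hab
    have hb : (0:ℝ) < b := lt_of_lt_of_le ha hab
    have hw1 : (0:ℝ) ≤ 1 - a / b := by
      rw [sub_nonneg, div_le_one hb]; exact hab
    have hw2 : (0:ℝ) ≤ a / b := div_nonneg ha.le hb.le
    have hsum : (1 - a / b) + a / b = 1 := by ring
    have hcx := hΦconv.2 (mem_Ici.2 le_rfl) (mem_Ici.2 hb.le) hw1 hw2 hsum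
    simp only [smul_eq_mul, mul_zero, zero_add] at hcx
    rw [div_mul_cancel₀ _ hb.ne'] at hcx
    rw [hΦ0, mul_zero, zero_add] at hcx
    rw [div_le_div_iff₀ ha hb]
    calc Φ a * b ≤ (a / b * Φ b) * b := by nlinarith
    _ = Φ b * a := by field_simp
  have hΦt₀pos : 0 < Φ t₀ := by
    rcases lt_or_eq_of_le (hΦnonneg t₀ ht₀.le) with h | h
    · exact h
    · exact absurd ((hΦzero t₀ ht₀.le).1 h.symm) (ne_of_gt ht₀)
  set ρ : ℕ → ℝ := fun n => Φ (t₀ * l ^ n) / (t₀ * l ^ n) with hρ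
  have htn_pos : ∀ n, 0 < t₀ * l ^ n := fun n => mul_pos ht₀ (pow_pos hl0 n)
  have htn_ge : ∀ n, t₀ ≤ t₀ * l ^ n := by
    intro n
    nlinarith [one_le_pow₀ hl.le (n := n), ht₀]
  have hρpos : ∀ n, 0 < ρ n := by
    intro n
    apply div_pos _ (htn_pos n)
    rcases lt_or_eq_of_le (hΦnonneg _ (htn_pos n).le) with h | h
    · exact h
    · exact absurd ((hΦzero _ (htn_pos n).le).1 h.symm) (ne_of_gt (htn_pos n))
  have hstep : ∀ n, (t₀ * l ^ n) * ρ n ≤ ρ (n + 1) := by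
    intro n
    have h1 := hΔ (t₀ * l ^ n) (htn_ge n)
    have h2 : l * (t₀ * l ^ n) = t₀ * l ^ (n + 1) := by ring
    rw [h2] at h1
    have h3 : Φ (t₀ * l ^ n) = (t₀ * l ^ n) * ρ n := by
      rw [hρ]; field_simp
    rw [h3] at h1
    exact h1
  obtain ⟨K, hK⟩ := pow_unbounded_of_one_lt ((l ^ 3) / t₀) hl
  have hKge : l ^ 3 ≤ t₀ * l ^ K := by
    rw [div_lt_iff₀ ht₀] at hK; nlinarith
  have hl3 : (1:ℝ) < l ^ 3 := one_lt_pow₀ hl (by norm_num)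
  have hind1 : ∀ m, ρ K * (l ^ 3) ^ m ≤ ρ (K + m) := by
    intro m
    induction m with
    | zero => simp
    | succ m ih =>
      have h1 := hstep (K + m)
      have h2 : l ^ 3 ≤ t₀ * l ^ (K + m) := by
        have : t₀ * l ^ K ≤ t₀ * l ^ (K + m) := by
          apply mul_le_mul_of_nonneg_left _ ht₀.le
          exact pow_le_pow_right₀ hl.le (Nat.le_add_right K m)
        linarith
      have h3 : l ^ 3 * ρ (K + m) ≤ (t₀ * l ^ (K + m)) * ρ (K + m) :=
        mul_le_mul_of_nonneg_right h2 (hρpos _).le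
      have h4 : ρ K * (l ^ 3) ^ (m + 1) = l ^ 3 * (ρ K * (l ^ 3) ^ m) := by ring
      rw [h4]
      calc l ^ 3 * (ρ K * (l ^ 3) ^ m) ≤ l ^ 3 * ρ (K + m) := by nlinarith
      _ ≤ (t₀ * l ^ (K + m)) * ρ (K + m) := h3
      _ ≤ ρ (K + m + 1) := h1
  obtain ⟨m₀, hm₀⟩ := pow_unbounded_of_one_lt ((t₀ * l ^ K) ^ 2 / ρ K) hl
  have hbase : ∀ n, K + m₀ ≤ n → (t₀ * l ^ n) ^ 2 ≤ ρ n := by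
    intro n hn
    obtain ⟨m, rfl⟩ : ∃ m, n = K + m := ⟨n - K, by omega⟩
    have hmm : m₀ ≤ m := by omega
    have h1 := hind1 m
    have h2 : (t₀ * l ^ K) ^ 2 ≤ ρ K * l ^ m₀ := by
      rw [div_lt_iff₀ (hρpos K)] at hm₀; nlinarith [hρpos K]
    have h3 : ρ K * l ^ m₀ ≤ ρ K * l ^ m :=
      mul_le_mul_of_nonneg_left (pow_le_pow_right₀ hl.le hmm) (hρpos K).le
    have h4 : (t₀ * l ^ (K + m)) ^ 2 = (t₀ * l ^ K) ^ 2 * (l ^ 2) ^ m := by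
      rw [pow_add]; ring
    have h5 : ρ K * (l ^ 3) ^ m = (ρ K * l ^ m) * (l ^ 2) ^ m := by
      rw [← pow_mul, ← pow_mul, mul_assoc, ← pow_add]
      have h35 : 3 * m = m + 2 * m := by omega
      rw [h35]
    rw [h4]
    have h6 : (0:ℝ) < (l ^ 2) ^ m := pow_pos (pow_pos hl0 2) m
    calc (t₀ * l ^ K) ^ 2 * (l ^ 2) ^ m ≤ (ρ K * l ^ m) * (l ^ 2) ^ m := by nlinarith
    _ = ρ K * (l ^ 3) ^ m := h5.symm
    _ ≤ ρ (K + m) := h1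
  set N := K + m₀ with hN
  -- fill the intervals
  have hfill : ∀ n, ∀ t : ℝ, t₀ * l ^ N ≤ t → t ≤ t₀ * l ^ (N + n) → (t / l) ^ 2 ≤ Φ t / t := by
    intro n
    induction n with
    | zero =>
      intro t h1 h2
      have ht : t = t₀ * l ^ N := le_antisymm (by simpa using h2) h1
      subst ht
      have := hbase N le_rfl
      have h3 : ((t₀ * l ^ N) / l) ^ 2 ≤ (t₀ * l ^ N) ^ 2 := by
        rw [div_pow]
        rw [div_le_iff₀ (by positivity)]
        nlinarith [sq_nonneg (t₀ * l ^ N), one_lt_pow₀ hl (show 2 ≠ 0 by norm_num)]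
      linarith
    | succ n ih =>
      intro t h1 h2
      rcases le_or_gt t (t₀ * l ^ (N + n)) with h | h
      · exact ih t h1 h
      · have htpos : 0 < t := lt_trans (htn_pos (N + n)) h
        have hs : Φ (t₀ * l ^ (N + n)) / (t₀ * l ^ (N + n)) ≤ Φ t / t :=
          hslope _ _ (htn_pos (N + n)) h.le
        have hb := hbase (N + n) (Nat.le_add_right N n)
        have hd : t / l ≤ t₀ * l ^ (N + n) := by
          rw [div_le_iff₀ hl0]
          calc t ≤ t₀ * l ^ (N + n + 1) := h2
          _ = t₀ * l ^ (N + n) * l := by ring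
        have hq : (t / l) ^ 2 ≤ (t₀ * l ^ (N + n)) ^ 2 := by
          apply sq_le_sq'
          · have : (0:ℝ) ≤ t / l := div_nonneg htpos.le hl0.le
            nlinarith [htn_pos (N+n)]
          · exact hd
        calc (t / l) ^ 2 ≤ (t₀ * l ^ (N + n)) ^ 2 := hq
        _ ≤ ρ (N + n) := hb
        _ ≤ Φ t / t := hs
  have hΦcube : ∀ t : ℝ, t₀ * l ^ N ≤ t → t ^ 3 / l ^ 2 ≤ Φ t := by
    intro t h1
    obtain ⟨n, hn⟩ := pow_unbounded_of_one_lt (t / (t₀ * l ^ N)) hl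
    have h2 : t ≤ t₀ * l ^ (N + n) := by
      rw [div_lt_iff₀ (htn_pos N)] at hn
      rw [pow_add]
      nlinarith
    have h3 := hfill n t h1 h2
    have htpos : 0 < t := lt_of_lt_of_le (htn_pos N) h1
    rw [le_div_iff₀ htpos] at h3
    have : (t / l) ^ 2 * t = t ^ 3 / l ^ 2 := by
      field_simp
    linarith [this ▸ h3]
  -- quadratic bound on Ψ
  set R : ℝ := max (max (t₀ * l ^ N) (l ^ 2)) 1 with hR
  have hR1 : (1:ℝ) ≤ R := le_max_right _ _
  have hR0 : (0:ℝ) < R := lt_of_lt_of_le one_pos hR1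
  have hΨsq : ∀ r : ℝ, R ≤ r → Ψ r ≤ r ^ 2 := by
    intro r hr
    have hr0 : (0:ℝ) ≤ r := le_trans hR0.le hr
    rw [hΨ r hr0]
    refine csSup_le (hSne r) ?_
    rintro y ⟨t, ht, rfl⟩
    have hrpos : (0:ℝ) < r := lt_of_lt_of_le hR0 hr
    have hsq : Real.sqrt r * Real.sqrt r = r := Real.mul_self_sqrt hr0
    rcases le_or_gt t (max (t₀ * l ^ N) (l * Real.sqrt r)) with h | h
    · have hmax_le : max (t₀ * l ^ N) (l * Real.sqrt r) ≤ r := by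
        apply max_le
        · exact le_trans (le_trans (le_max_left _ _) (le_max_left _ 1)) hr
        · have hl2 : l ^ 2 ≤ r := le_trans (le_trans (le_max_right _ _) (le_max_left _ 1)) hr
          have hsl : l ≤ Real.sqrt r := by
            rw [show l = Real.sqrt (l ^ 2) by rw [Real.sqrt_sq hl0.le]]
            exact Real.sqrt_le_sqrt hl2
          nlinarith [Real.sqrt_nonneg r]
      have h2 : t ≤ r := le_trans h hmax_le
      nlinarith [hΦnonneg t ht, mul_le_mul_of_nonneg_left h2 hrpos.le]
    · have h1 : t₀ * l ^ N ≤ t := le_trans (le_max_left _ _) h.le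
      have h2 : l * Real.sqrt r ≤ t := le_trans (le_max_right _ _) h.le
      have hcube := hΦcube t h1
      have htpos : 0 < t := lt_of_lt_of_le (htn_pos N) h1
      have h3 : l ^ 2 * r ≤ t ^ 2 := by nlinarith [hsq, mul_self_le_mul_self (mul_nonneg hl0.le (Real.sqrt_nonneg r)) h2]
      have h4 : r * t ≤ t ^ 3 / l ^ 2 := by
        rw [le_div_iff₀ (by positivity)]
        nlinarith
      nlinarith [sq_nonneg r]
  -- sqrt lower bound on Ψinv
  have hIsqrt : ∀ t : ℝ, R ^ 2 ≤ t → Real.sqrt t ≤ Ψinv t := by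
    intro t ht
    have ht0 : (0:ℝ) ≤ t := le_trans (by positivity) ht
    have h1 : R ≤ Real.sqrt t := by
      rw [show R = Real.sqrt (R ^ 2) by rw [Real.sqrt_sq hR0.le]]
      exact Real.sqrt_le_sqrt ht
    have h2 : Ψ (Real.sqrt t) ≤ t := by
      have := hΨsq (Real.sqrt t) h1
      rwa [Real.sq_sqrt ht0] at this
    have h3 : Ψinv (Ψ (Real.sqrt t)) ≤ Ψinv t :=
      hImono _ _ (hΨnonneg _ (le_trans hR0.le h1)) h2
    rwa [hΨinv' _ (le_trans hR0.le h1)] at h3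
  -- bound on φ₁inv
  have hφinvb : ∀ u : ℝ, R ^ 3 ≤ u → φ₁inv u ≤ u ^ ((2:ℝ)/3) := by
    intro u hu
    have hu0 : (0:ℝ) ≤ u := le_trans (by positivity) hu
    obtain ⟨ht0, htu⟩ := hright u hu0
    set t := φ₁inv u with htdef
    have hR23 : R ^ 2 ≤ u ^ ((2:ℝ)/3) := by
      have h1 : (R ^ 3 : ℝ) ^ ((2:ℝ)/3) ≤ u ^ ((2:ℝ)/3) :=
        Real.rpow_le_rpow (by positivity) hu (by norm_num)
      have h2 : (R ^ 3 : ℝ) ^ ((2:ℝ)/3) = R ^ 2 := by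
        rw [← Real.rpow_natCast R 3, ← Real.rpow_mul hR0.le]
        norm_num
      rw [h2] at h1; exact h1
    rcases le_or_gt t (R ^ 2) with h | h
    · exact le_trans h hR23
    · have htpos : (0:ℝ) < t := lt_of_le_of_lt (by positivity) h
      have hsq : Real.sqrt t ≤ Ψinv t := hIsqrt t h.le
      have h32 : t ^ ((3:ℝ)/2) ≤ u := by
        have h1 : t * Real.sqrt t ≤ t * Ψinv t := mul_le_mul_of_nonneg_left hsq htpos.le
        rw [htu] at h1
        have h2 : t * Real.sqrt t = t ^ ((3:ℝ)/2) := by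
          rw [Real.sqrt_eq_rpow]
          nth_rewrite 1 [← Real.rpow_one t]
          rw [← Real.rpow_add htpos]
          norm_num
        rw [h2] at h1; exact h1
      have : t = (t ^ ((3:ℝ)/2)) ^ ((2:ℝ)/3) := by
        rw [← Real.rpow_mul htpos.le]
        norm_num
      rw [this]
      exact Real.rpow_le_rpow (by positivity) h32 (by norm_num)
  -- integrability
  refine ⟨1 / R ^ 3, by positivity, ?_⟩
  have hmeas : Measurable (fun s : ℝ => φ₁inv (1 / s)) := by
    have h1 : Measurable φ₁inv := hinvmono.measurable
    have h2 : Measurable (fun s : ℝ => 1 / s) := by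
      simpa [one_div] using (measurable_inv : Measurable fun s : ℝ => s⁻¹)
    exact h1.comp h2
  have hgint : IntegrableOn (fun s : ℝ => s ^ (-(2:ℝ)/3)) (Ioc 0 (1 / R ^ 3)) := by
    have := intervalIntegral.intervalIntegrable_rpow' (a := 0) (b := 1 / R ^ 3)
      (r := -(2:ℝ)/3) (by norm_num)
    exact this.1
  refine Integrable.mono' hgint (hmeas.aestronglyMeasurable.restrict) ?_
  rw [ae_restrict_iff' measurableSet_Ioc]
  refine Eventually.of_forall ?_
  rintro s ⟨hs0, hsα⟩
  have hs0' : (0:ℝ) < s := hs0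
  have h1s : R ^ 3 ≤ 1 / s := by
    rw [le_div_iff₀ hs0']
    calc R ^ 3 * s ≤ R ^ 3 * (1 / R ^ 3) := mul_le_mul_of_nonneg_left hsα (by positivity)
    _ = 1 := by field_simp
  have hb := hφinvb (1 / s) h1s
  have hnn : 0 ≤ φ₁inv (1 / s) := (hright (1 / s) (by positivity)).1
  rw [Real.norm_of_nonneg hnn]
  calc φ₁inv (1 / s) ≤ (1 / s) ^ ((2:ℝ)/3) := hb
  _ = s ^ (-(2:ℝ)/3) := by
      rw [one_div, Real.inv_rpow hs0'.le, ← Real.rpow_neg hs0'.le]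
      norm_num
end

section
/- Let (X, m) be a finite measure space, let Φ be an N-function with complementary function Ψ, and set φ₁(t) := t·Ψ^{-1}(t). If f : X → ℝ is measurable with ∫_X Φ(|f|) dm < ∞, then ∫_X φ₁(|f|) dm < ∞. -/
open MeasureTheory Filter Set

/-- On a finite measure space, if `Φ` is an N-function with
complementary function `Ψ` and `φ₁ t := t * Ψ⁻¹ t`, then for any measurable `f` with
`∫ Φ(|f|) dm < ∞` one also has `∫ φ₁(|f|) dm < ∞` (the embedding `L^Φ ⊆ L^{φ₁}`). -/
theorem ground_state_stmt5
    {X : Type*} [MeasurableSpace X] (m : Measure X) [IsFiniteMeasure m]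
    (Φ Ψ Ψinv : ℝ → ℝ)
    -- Φ is an N-function
    (hΦconv : ConvexOn ℝ (Set.Ici 0) Φ)
    (hΦnonneg : ∀ t ≥ (0:ℝ), 0 ≤ Φ t)
    (hΦzero : ∀ t ≥ (0:ℝ), (Φ t = 0 ↔ t = 0))
    (hΦlim0 : Tendsto (fun t => Φ t / t) (nhdsWithin 0 (Set.Ioi 0)) (nhds 0))
    (hΦtop : Tendsto (fun t => Φ t / t) atTop atTop)
    -- Ψ is the complementary function of Φ
    (hΨ : ∀ r ≥ (0:ℝ), Ψ r = sSup {y : ℝ | ∃ t, 0 ≤ t ∧ y = r * t - Φ t})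
    -- Ψinv is the (generalized) inverse of Ψ on [0,∞)
    (hΨinv : ∀ t ≥ (0:ℝ), 0 ≤ Ψinv t ∧ Ψ (Ψinv t) = t)
    (hΨinv' : ∀ t ≥ (0:ℝ), Ψinv (Ψ t) = t)
    (f : X → ℝ) (hf : Measurable f)
    (hint : ∫⁻ x, ENNReal.ofReal (Φ |f x|) ∂m < ⊤) :
    ∫⁻ x, ENNReal.ofReal (|f x| * Ψinv |f x|) ∂m < ⊤ := by
  -- Young's inequality specialised to r = Ψinv s
  have young : ∀ s : ℝ, 0 ≤ s → s * Ψinv s ≤ Φ s + s := by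
    intro s hs
    obtain ⟨hr, hΨr⟩ := hΨinv s hs
    set r := Ψinv s with hrdef
    obtain ⟨T, hT⟩ := Filter.eventually_atTop.1 (hΦtop.eventually_ge_atTop (r + 1))
    set T' := max T 1 with hT'def
    have hT'1 : (1:ℝ) ≤ T' := le_max_right T 1
    have hbdd : BddAbove {y : ℝ | ∃ t, 0 ≤ t ∧ y = r * t - Φ t} := by
      refine ⟨r * T', ?_⟩
      rintro y ⟨t, ht, rfl⟩
      by_cases hcase : t ≤ T'
      · have hΦt := hΦnonneg t ht
        nlinarith [mul_le_mul_of_nonneg_left hcase hr]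
      · push_neg at hcase
        have hTt : T ≤ t := le_trans (le_max_left T 1) hcase.le
        have htpos : 0 < t := lt_of_lt_of_le one_pos (le_trans hT'1 hcase.le)
        have h2 : r + 1 ≤ Φ t / t := hT t hTt
        have h3 : (r + 1) * t ≤ Φ t := (le_div_iff₀ htpos).1 h2
        nlinarith
    have hmem : r * s - Φ s ∈ {y : ℝ | ∃ t, 0 ≤ t ∧ y = r * t - Φ t} := ⟨s, hs, rfl⟩
    have hle : r * s - Φ s ≤ s := by
      have h := le_csSup hbdd hmem
      rw [← hΨ r hr, hΨr] at h
      exact h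
    have hc : s * r = r * s := mul_comm s r
    linarith
  -- superlinearity : |f x| ≤ Φ |f x| + t1 for a suitable constant t1 ≥ 0
  obtain ⟨t0, ht0⟩ := Filter.eventually_atTop.1 (hΦtop.eventually_ge_atTop 1)
  set t1 := max t0 0 with ht1def
  have ht1n : (0:ℝ) ≤ t1 := le_max_right t0 0
  have habs : ∀ x : X, |f x| ≤ Φ |f x| + t1 := by
    intro x
    have hax : (0:ℝ) ≤ |f x| := abs_nonneg _
    by_cases h : |f x| ≤ t1
    · have := hΦnonneg _ hax
      linarith
    · push_neg at h
      have ht0le : t0 ≤ |f x| := le_trans (le_max_left t0 0) h.le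
      have hpos : 0 < |f x| := lt_of_le_of_lt ht1n h
      have h1 : (1:ℝ) ≤ Φ |f x| / |f x| := ht0 _ ht0le
      have h2 : |f x| ≤ Φ |f x| := by
        have := (le_div_iff₀ hpos).1 h1
        linarith
      linarith
  have hmeasg : Measurable fun x => ENNReal.ofReal |f x| :=
    ENNReal.measurable_ofReal.comp hf.abs
  have step1 : ∫⁻ x, ENNReal.ofReal (|f x| * Ψinv |f x|) ∂m
      ≤ ∫⁻ x, ENNReal.ofReal (Φ |f x|) ∂m + ∫⁻ x, ENNReal.ofReal |f x| ∂m := by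
    rw [← lintegral_add_right _ hmeasg]
    refine lintegral_mono fun x => ?_
    calc ENNReal.ofReal (|f x| * Ψinv |f x|)
        ≤ ENNReal.ofReal (Φ |f x| + |f x|) :=
          ENNReal.ofReal_le_ofReal (young _ (abs_nonneg _))
      _ ≤ ENNReal.ofReal (Φ |f x|) + ENNReal.ofReal |f x| := ENNReal.ofReal_add_le
  have step2 : ∫⁻ x, ENNReal.ofReal |f x| ∂m
      ≤ ∫⁻ x, ENNReal.ofReal (Φ |f x|) ∂m + ENNReal.ofReal t1 * m Set.univ := by
    have : ∫⁻ x, ENNReal.ofReal |f x| ∂m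
        ≤ ∫⁻ x, (ENNReal.ofReal (Φ |f x|) + ENNReal.ofReal t1) ∂m := by
      refine lintegral_mono fun x => ?_
      calc ENNReal.ofReal |f x| ≤ ENNReal.ofReal (Φ |f x| + t1) :=
            ENNReal.ofReal_le_ofReal (habs x)
        _ ≤ ENNReal.ofReal (Φ |f x|) + ENNReal.ofReal t1 := ENNReal.ofReal_add_le
    rwa [lintegral_add_right _ measurable_const, lintegral_const] at this
  have hfin : ENNReal.ofReal t1 * m Set.univ < ⊤ :=
    ENNReal.mul_lt_top ENNReal.ofReal_lt_top (measure_lt_top m _)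
  calc ∫⁻ x, ENNReal.ofReal (|f x| * Ψinv |f x|) ∂m
      ≤ ∫⁻ x, ENNReal.ofReal (Φ |f x|) ∂m + ∫⁻ x, ENNReal.ofReal |f x| ∂m := step1
    _ ≤ ∫⁻ x, ENNReal.ofReal (Φ |f x|) ∂m +
        (∫⁻ x, ENNReal.ofReal (Φ |f x|) ∂m + ENNReal.ofReal t1 * m Set.univ) :=
          add_le_add_right step2 _
    _ < ⊤ := ENNReal.add_lt_top.2 ⟨hint, ENNReal.add_lt_top.2 ⟨hint, hfin⟩⟩
end

section
/- Let H be a Hilbert space, let (A_k) be a sequence of bounded self-adjoint operators on H and let A be a compact self-adjoint operator on H such that 0 ≤ A_k ≤ A_{k+1} ≤ A in the form sense for all k and A_k x → A x in norm for every x ∈ H. Then each A_k is compact and ‖A_k − A‖ → 0 in operator norm. -/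
open MeasureTheory Filter Set
open scoped RealInnerProductSpace

section GS8Aux
variable {H : Type*} [NormedAddCommGroup H] [InnerProductSpace ℝ H]

/-- Generalized Cauchy–Schwarz for a positive symmetric operator. -/
lemma gs8_cs (T : H →L[ℝ] H) (hsym : ∀ x y : H, ⟪T x, y⟫ = ⟪x, T y⟫)
    (hp : ∀ x : H, 0 ≤ ⟪T x, x⟫) (x y : H) :
    ⟪T x, y⟫ ^ 2 ≤ ⟪T x, x⟫ * ⟪T y, y⟫ := by
  have key : ∀ t : ℝ, 0 ≤ ⟪T y, y⟫ * (t * t) + (2 * ⟪T x, y⟫) * t + ⟪T x, x⟫ := by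
    intro t
    have h := hp (x + t • y)
    have hyx : ⟪T y, x⟫ = ⟪T x, y⟫ := by
      rw [hsym y x, real_inner_comm]
    simp only [map_add, ContinuousLinearMap.map_smul, inner_add_left, inner_add_right, real_inner_smul_left,
      real_inner_smul_right] at h
    rw [hyx] at h
    nlinarith [h]
  have hd := discrim_le_zero key
  rw [discrim] at hd
  nlinarith [hd]

lemma gs8_norm_sq (T : H →L[ℝ] H) (hsym : ∀ x y : H, ⟪T x, y⟫ = ⟪x, T y⟫)
    (hp : ∀ x : H, 0 ≤ ⟪T x, x⟫) (x : H) :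
    ‖T x‖ ^ 2 ≤ ‖T‖ * ⟪T x, x⟫ := by
  have h1 := gs8_cs T hsym hp x (T x)
  have h3 : ⟪T x, T x⟫ = ‖T x‖ ^ 2 := real_inner_self_eq_norm_sq (T x)
  have h2 : ⟪T (T x), T x⟫ ≤ (‖T‖ * ‖T x‖) * ‖T x‖ := by
    calc ⟪T (T x), T x⟫ ≤ ‖T (T x)‖ * ‖T x‖ := real_inner_le_norm _ _
      _ ≤ (‖T‖ * ‖T x‖) * ‖T x‖ := by
          gcongr
          exact T.le_opNorm _
  rcases eq_or_lt_of_le (norm_nonneg (T x)) with hz | hz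
  · rw [← hz]
    simpa using mul_nonneg (norm_nonneg T) (hp x)
  · have h4 : (‖T x‖ ^ 2) ^ 2 ≤ ⟪T x, x⟫ * ((‖T‖ * ‖T x‖) * ‖T x‖) := by
      calc (‖T x‖ ^ 2) ^ 2 = ⟪T x, T x⟫ ^ 2 := by rw [h3]
        _ ≤ ⟪T x, x⟫ * ⟪T (T x), T x⟫ := h1
        _ ≤ ⟪T x, x⟫ * ((‖T‖ * ‖T x‖) * ‖T x‖) := mul_le_mul_of_nonneg_left h2 (hp x)
    nlinarith [h4, hp x, hz, mul_pos hz hz]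

end GS8Aux

/-- If `(A_k)` is a sequence of bounded self-adjoint operators and `A`
a compact self-adjoint operator on a Hilbert space with `0 ≤ A_k ≤ A_{k+1} ≤ A` in the
form sense and `A_k x → A x` for every `x`, then each `A_k` is compact and
`‖A_k − A‖ → 0`. -/
theorem ground_state_stmt8
    {H : Type*} [NormedAddCommGroup H] [InnerProductSpace ℝ H] [CompleteSpace H]
    (A : ℕ → H →L[ℝ] H) (Alim : H →L[ℝ] H)
    (hAsa : ∀ k, IsSelfAdjoint (A k)) (hAlimsa : IsSelfAdjoint Alim)
    (hAlimcompact : IsCompactOperator (⇑Alim))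
    (hpos : ∀ k, ∀ x : H, 0 ≤ ⟪A k x, x⟫)
    (hmono : ∀ k, ∀ x : H, ⟪A k x, x⟫ ≤ ⟪A (k + 1) x, x⟫)
    (hle : ∀ k, ∀ x : H, ⟪A k x, x⟫ ≤ ⟪Alim x, x⟫)
    (hstrong : ∀ x : H, Tendsto (fun k => A k x) atTop (nhds (Alim x))) :
    (∀ k, IsCompactOperator (⇑(A k))) ∧
    Tendsto (fun k => ‖A k - Alim‖) atTop (nhds 0) := by
  -- uniform boundedness
  obtain ⟨C, hC⟩ : ∃ C, ∀ k, ‖A k‖ ≤ C := by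
    apply banach_steinhaus
    intro x
    obtain ⟨c, hc⟩ := (hstrong x).norm.bddAbove_range
    exact ⟨c, fun k => hc (mem_range_self k)⟩
  set M : ℝ := C + ‖Alim‖ + 1 with hMdef
  have hMpos : 0 < M := by
    have h1 := hC 0
    have h2 := norm_nonneg (A 0)
    have h3 := norm_nonneg Alim
    simp only [hMdef]; linarith
  have hsymA : ∀ k (x y : H), ⟪A k x, y⟫ = ⟪x, A k y⟫ := fun k =>
    ContinuousLinearMap.isSelfAdjoint_iff_isSymmetric.mp (hAsa k)
  have hsymL : ∀ x y : H, ⟪Alim x, y⟫ = ⟪x, Alim y⟫ :=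
    ContinuousLinearMap.isSelfAdjoint_iff_isSymmetric.mp hAlimsa
  have hposL : ∀ x : H, 0 ≤ ⟪Alim x, x⟫ := fun x => le_trans (hpos 0 x) (hle 0 x)
  have hAkM : ∀ k, ‖A k‖ ≤ M := by
    intro k
    have := hC k
    have := norm_nonneg Alim
    simp only [hMdef]; linarith
  have hTM : ∀ k, ‖Alim - A k‖ ≤ M := by
    intro k
    have h1 := norm_sub_le Alim (A k)
    have h2 := hC k
    simp only [hMdef]; linarith
  -- key difference estimate
  have hdiff : ∀ B : H →L[ℝ] H, (∀ x y : H, ⟪B x, y⟫ = ⟪x, B y⟫) →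
      (∀ x : H, 0 ≤ ⟪B x, x⟫) → (∀ x : H, ⟪B x, x⟫ ≤ ⟪Alim x, x⟫) → ‖B‖ ≤ M →
      ∀ x y : H, ‖x‖ ≤ 1 → ‖y‖ ≤ 1 → ‖B x - B y‖ ^ 2 ≤ 2 * M * ‖Alim x - Alim y‖ := by
    intro B hsym hp hleB hBM x y hx hy
    have h4 : ‖x - y‖ ≤ 2 := by
      calc ‖x - y‖ ≤ ‖x‖ + ‖y‖ := norm_sub_le _ _
        _ ≤ 2 := by linarith
    calc ‖B x - B y‖ ^ 2 = ‖B (x - y)‖ ^ 2 := by rw [map_sub]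
      _ ≤ ‖B‖ * ⟪B (x - y), x - y⟫ := gs8_norm_sq B hsym hp _
      _ ≤ M * ⟪B (x - y), x - y⟫ := mul_le_mul_of_nonneg_right hBM (hp _)
      _ ≤ M * ⟪Alim (x - y), x - y⟫ := mul_le_mul_of_nonneg_left (hleB _) hMpos.le
      _ ≤ M * (‖Alim (x - y)‖ * ‖x - y‖) := mul_le_mul_of_nonneg_left (real_inner_le_norm _ _) hMpos.le
      _ ≤ M * (‖Alim (x - y)‖ * 2) := by
          have := mul_le_mul_of_nonneg_left h4 (norm_nonneg (Alim (x - y)))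
          exact mul_le_mul_of_nonneg_left this hMpos.le
      _ = 2 * M * ‖Alim x - Alim y‖ := by rw [map_sub]; ring
  -- total boundedness of the image of the unit ball under Alim
  have htb : TotallyBounded (⇑Alim '' Metric.closedBall (0 : H) 1) := by
    obtain ⟨K0, hK0c, hK0⟩ := hAlimcompact
    obtain ⟨r, hr, hball⟩ := Metric.mem_nhds_iff.mp hK0
    set c : ℝ := r / 2 with hcdef
    have hc : 0 < c := half_pos hr
    have hsub : ⇑Alim '' Metric.closedBall (0 : H) 1 ⊆ (fun z => c⁻¹ • z) '' K0 := by
      rintro _ ⟨x, hx, rfl⟩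
      have hx1 : ‖x‖ ≤ 1 := mem_closedBall_zero_iff.mp hx
      have hcx : c • x ∈ Metric.ball (0 : H) r := by
        rw [mem_ball_zero_iff, norm_smul, Real.norm_eq_abs, abs_of_pos hc]
        nlinarith
      have hmem : Alim (c • x) ∈ K0 := hball hcx
      refine ⟨Alim (c • x), hmem, ?_⟩
      show c⁻¹ • Alim (c • x) = Alim x
      rw [ContinuousLinearMap.map_smul, smul_smul, inv_mul_cancel₀ hc.ne', one_smul]
    exact ((hK0c.image (continuous_const_smul c⁻¹)).totallyBounded).subset hsub
  -- finite nets
  have hnet : ∀ δ : ℝ, 0 < δ → ∃ s : Set H, s.Finite ∧ (∀ i ∈ s, ‖i‖ ≤ 1) ∧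
      ∀ x : H, ‖x‖ ≤ 1 → ∃ i ∈ s, ‖Alim x - Alim i‖ < δ := by
    intro δ hδ
    obtain ⟨t, hts, htfin, htcov⟩ := Metric.finite_approx_of_totallyBounded htb δ hδ
    choose! f hf1 hf2 using fun (y : H) (hy : y ∈ t) => hts hy
    refine ⟨f '' t, htfin.image f, ?_, ?_⟩
    · rintro _ ⟨y, hy, rfl⟩
      exact mem_closedBall_zero_iff.mp (hf1 y hy)
    · intro x hx
      have hx' : Alim x ∈ ⋃ y ∈ t, Metric.ball y δ :=
        htcov ⟨x, mem_closedBall_zero_iff.mpr hx, rfl⟩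
      simp only [mem_iUnion, exists_prop] at hx'
      obtain ⟨y, hy, hxy⟩ := hx'
      refine ⟨f y, mem_image_of_mem f hy, ?_⟩
      rw [hf2 y hy, ← dist_eq_norm]
      exact Metric.mem_ball.mp hxy
  constructor
  · -- compactness of each A k
    intro k
    have htbk : TotallyBounded (⇑(A k) '' Metric.closedBall (0 : H) 1) := by
      rw [Metric.totallyBounded_iff]
      intro ε hε
      have hδ : 0 < ε ^ 2 / (4 * M) := by
        apply div_pos (by positivity) (by linarith)
      obtain ⟨s, hsfin, hs1, hscov⟩ := hnet (ε ^ 2 / (4 * M)) hδ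
      refine ⟨⇑(A k) '' s, hsfin.image _, ?_⟩
      rintro _ ⟨x, hx, rfl⟩
      have hx1 : ‖x‖ ≤ 1 := mem_closedBall_zero_iff.mp hx
      obtain ⟨i, hi, hxi⟩ := hscov x hx1
      have hest := hdiff (A k) (hsymA k) (hpos k) (hle k) (hAkM k) x i hx1 (hs1 i hi)
      have hsq : ‖A k x - A k i‖ ^ 2 < ε ^ 2 := by
        have h2 : 2 * M * ‖Alim x - Alim i‖ < 2 * M * (ε ^ 2 / (4 * M)) := by
          apply mul_lt_mul_of_pos_left hxi (by linarith)
        have h3 : 2 * M * (ε ^ 2 / (4 * M)) = ε ^ 2 / 2 := by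
          field_simp
          ring
        have h4 := hest.trans (h2.le.trans_eq h3)
        nlinarith [h4, sq_nonneg ε]
      have hlt : ‖A k x - A k i‖ < ε := by
        nlinarith [norm_nonneg (A k x - A k i), hε]
      simp only [mem_iUnion, exists_prop]
      exact ⟨A k i, mem_image_of_mem _ hi, by rwa [Metric.mem_ball, dist_eq_norm]⟩
    have hcl : IsCompact (closure (⇑(A k) '' Metric.closedBall (0 : H) 1)) :=
      TotallyBounded.isCompact_of_isClosed htbk.closure isClosed_closure
    exact ⟨_, hcl, Filter.mem_of_superset (Metric.closedBall_mem_nhds 0 one_pos)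
      (fun x hx => subset_closure (mem_image_of_mem _ hx))⟩
  · -- norm convergence
    rw [Metric.tendsto_atTop]
    intro ε hε
    set s₀ : ℝ := ε ^ 2 / (4 * M) with hs₀def
    have hs₀ : 0 < s₀ := div_pos (by positivity) (by linarith)
    set δ : ℝ := s₀ ^ 2 / (8 * M) with hδdef
    have hδ : 0 < δ := div_pos (by positivity) (by linarith)
    obtain ⟨s, hsfin, hs1, hscov⟩ := hnet δ hδ
    have hev : ∀ᶠ k in atTop, ∀ i ∈ s, ‖A k i - Alim i‖ < s₀ / 6 := by
      rw [eventually_all_finite hsfin]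
      intro i hi
      obtain ⟨N, hN⟩ := Metric.tendsto_atTop.mp (hstrong i) (s₀ / 6) (by linarith)
      exact eventually_atTop.mpr ⟨N, fun k hk => by
        rw [← dist_eq_norm]; exact hN k hk⟩
    obtain ⟨N, hN⟩ := eventually_atTop.mp hev
    refine ⟨N, fun k hk => ?_⟩
    rw [Real.dist_eq, sub_zero, abs_of_nonneg (norm_nonneg _)]
    set T : H →L[ℝ] H := Alim - A k with hTdef
    have hTsym : ∀ x y : H, ⟪T x, y⟫ = ⟪x, T y⟫ := by
      intro x y
      simp only [hTdef, ContinuousLinearMap.sub_apply, inner_sub_left, inner_sub_right,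
        hsymL x y, hsymA k x y]
    have hTpos : ∀ x : H, 0 ≤ ⟪T x, x⟫ := by
      intro x
      simp only [hTdef, ContinuousLinearMap.sub_apply, inner_sub_left]
      linarith [hle k x]
    have hTle : ∀ x : H, ⟪T x, x⟫ ≤ ⟪Alim x, x⟫ := by
      intro x
      simp only [hTdef, ContinuousLinearMap.sub_apply, inner_sub_left]
      linarith [hpos k x]
    have hb : ∀ x : H, ‖x‖ = 1 → ‖T x‖ ≤ ε / 2 := by
      intro x hx
      obtain ⟨i, hi, hxi⟩ := hscov x (le_of_eq hx)
      have hi1 : ‖i‖ ≤ 1 := hs1 i hi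
      have hTi : ‖T i‖ < s₀ / 6 := by
        simp only [hTdef, ContinuousLinearMap.sub_apply]
        rw [norm_sub_rev]
        exact hN k hk i hi
      have hdiffT := hdiff T hTsym hTpos hTle (hTM k) x i (le_of_eq hx) hi1
      have e1 : ‖T x - T i‖ ^ 2 ≤ s₀ ^ 2 / 4 := by
        have h2 : 2 * M * ‖Alim x - Alim i‖ ≤ 2 * M * δ :=
          mul_le_mul_of_nonneg_left hxi.le (by linarith)
        have h3 : 2 * M * δ = s₀ ^ 2 / 4 := by
          rw [hδdef]; field_simp; ring
        exact hdiffT.trans (h2.trans_eq h3)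
      have e1' : ‖T x - T i‖ ≤ s₀ / 2 := by
        nlinarith [norm_nonneg (T x - T i), hs₀]
      have hform : ⟪T x, x⟫ ≤ s₀ := by
        have hdec : ⟪T x, x⟫ = ⟪T x - T i, x⟫ + ⟪T i, x - i⟫ + ⟪T i, i⟫ := by
          simp only [inner_sub_left, inner_sub_right]
          ring
        have hxsub : ‖x - i‖ ≤ 2 := by
          calc ‖x - i‖ ≤ ‖x‖ + ‖i‖ := norm_sub_le _ _
            _ ≤ 2 := by rw [hx]; linarith
        have b1 : ⟪T x - T i, x⟫ ≤ s₀ / 2 := by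
          calc ⟪T x - T i, x⟫ ≤ ‖T x - T i‖ * ‖x‖ := real_inner_le_norm _ _
            _ ≤ (s₀ / 2) * 1 := mul_le_mul e1' (le_of_eq hx) (norm_nonneg x) (by linarith)
            _ = s₀ / 2 := mul_one _
        have b2 : ⟪T i, x - i⟫ ≤ (s₀ / 6) * 2 := by
          calc ⟪T i, x - i⟫ ≤ ‖T i‖ * ‖x - i‖ := real_inner_le_norm _ _
            _ ≤ (s₀ / 6) * 2 := mul_le_mul hTi.le hxsub (norm_nonneg _) (by linarith)
        have b3 : ⟪T i, i⟫ ≤ s₀ / 6 := by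
          calc ⟪T i, i⟫ ≤ ‖T i‖ * ‖i‖ := real_inner_le_norm _ _
            _ ≤ (s₀ / 6) * 1 := mul_le_mul hTi.le hi1 (norm_nonneg _) (by linarith)
            _ = s₀ / 6 := mul_one _
        rw [hdec]; linarith
      have h2 : ‖T x‖ ^ 2 ≤ M * s₀ := by
        calc ‖T x‖ ^ 2 ≤ ‖T‖ * ⟪T x, x⟫ := gs8_norm_sq T hTsym hTpos x
          _ ≤ M * ⟪T x, x⟫ := mul_le_mul_of_nonneg_right (hTM k) (hTpos x)
          _ ≤ M * s₀ := mul_le_mul_of_nonneg_left hform hMpos.le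
      have hMs : M * s₀ = ε ^ 2 / 4 := by
        rw [hs₀def]; field_simp
      nlinarith [norm_nonneg (T x), hε]
    have hnorm : ‖A k - Alim‖ ≤ ε / 2 := by
      have hneg : A k - Alim = -T := by rw [hTdef, neg_sub]
      rw [hneg, norm_neg]
      exact ContinuousLinearMap.opNorm_le_of_unit_norm (by linarith) hb
    linarith
end

section
/- Let H be a Hilbert space, let (P_k) be a sequence of orthogonal projections on H converging in operator norm to an orthogonal projection P whose range is one-dimensional, and let (φ_k) be a sequence of unit vectors with P_k φ_k = φ_k for every k. Then there exist a subsequence (φ_{k_j}) and a vector h ∈ H such that φ_{k_j} converges weakly to h, φ_{k_j} converges in norm to P h, and ‖P h‖ = 1 (in particular P h is a unit vector in the range of P). -/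
open MeasureTheory Filter Set
open scoped RealInnerProductSpace

/-- If `(P_k)` are orthogonal projections converging in operator norm
to an orthogonal projection `P` with one-dimensional range, and `(φ_k)` are unit vectors
with `P_k φ_k = φ_k`, then some subsequence `(φ_{k_j})` converges weakly to a vector `h`,
converges in norm to `P h`, and `‖P h‖ = 1`. -/
theorem ground_state_stmt9
    {H : Type*} [NormedAddCommGroup H] [InnerProductSpace ℝ H] [CompleteSpace H]
    (P : ℕ → H →L[ℝ] H) (Plim : H →L[ℝ] H)
    -- each P k is an orthogonal projection
    (hPsa : ∀ k, IsSelfAdjoint (P k)) (hPidem : ∀ k, (P k) ∘L (P k) = P k)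
    -- Plim is an orthogonal projection
    (hPlimsa : IsSelfAdjoint Plim) (hPlimidem : Plim ∘L Plim = Plim)
    -- norm convergence
    (hconv : Tendsto (fun k => ‖P k - Plim‖) atTop (nhds 0))
    -- the range of Plim is one-dimensional
    (hrank : Module.finrank ℝ (LinearMap.range (Plim : H →ₗ[ℝ] H)) = 1)
    (φ : ℕ → H) (hφnorm : ∀ k, ‖φ k‖ = 1) (hφfix : ∀ k, P k (φ k) = φ k) :
    ∃ kj : ℕ → ℕ, StrictMono kj ∧ ∃ h : H,
      (∀ y : H, Tendsto (fun j => ⟪φ (kj j), y⟫) atTop (nhds ⟪h, y⟫)) ∧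
      Tendsto (fun j => ‖φ (kj j) - Plim h‖) atTop (nhds 0) ∧
      ‖Plim h‖ = 1 := by
  classical
  set V := LinearMap.range (Plim : H →ₗ[ℝ] H) with hV
  haveI : FiniteDimensional ℝ V := FiniteDimensional.of_finrank_eq_succ hrank
  have hmem : ∀ k, Plim (φ k) ∈ V := fun k => ⟨φ k, rfl⟩
  set g : ℕ → V := fun k => ⟨Plim (φ k), hmem k⟩ with hg
  have hgbdd : ∀ k, g k ∈ Metric.closedBall (0 : V) ‖Plim‖ := by
    intro k
    have : ‖Plim (φ k)‖ ≤ ‖Plim‖ := by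
      calc ‖Plim (φ k)‖ ≤ ‖Plim‖ * ‖φ k‖ := Plim.le_opNorm _
      _ = ‖Plim‖ := by rw [hφnorm k]; ring
    simpa [Metric.mem_closedBall, dist_zero_right] using this
  obtain ⟨a, -, kj, hmono, hlim⟩ :=
    tendsto_subseq_of_bounded Metric.isBounded_closedBall hgbdd
  -- Plim fixes a
  have haV : (a : H) ∈ V := a.2
  obtain ⟨x, hx⟩ := haV
  have hfix : Plim (a : H) = (a : H) := by
    rw [← hx]
    have := congrArg (fun T : H →L[ℝ] H => T x) hPlimidem
    simpa using this
  -- Plim (φ (kj j)) → a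
  have hPlim_tendsto : Tendsto (fun j => Plim (φ (kj j))) atTop (nhds (a : H)) := by
    have := (continuous_subtype_val.tendsto a).comp hlim
    exact this
  -- ‖φ k - Plim (φ k)‖ ≤ ‖P k - Plim‖
  have hdiff : ∀ k, ‖φ k - Plim (φ k)‖ ≤ ‖P k - Plim‖ := by
    intro k
    have h1 := (P k - Plim).le_opNorm (φ k)
    simpa [ContinuousLinearMap.sub_apply, hφfix k, hφnorm k] using h1
  have hconv' : Tendsto (fun j => ‖P (kj j) - Plim‖) atTop (nhds 0) :=
    hconv.comp hmono.tendsto_atTop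
  have hdiff0 : Tendsto (fun j => φ (kj j) - Plim (φ (kj j))) atTop (nhds 0) := by
    rw [tendsto_zero_iff_norm_tendsto_zero]
    exact squeeze_zero (fun j => norm_nonneg _) (fun j => hdiff (kj j)) hconv'
  have hφlim : Tendsto (fun j => φ (kj j)) atTop (nhds (a : H)) := by
    have := hdiff0.add hPlim_tendsto
    simpa using this
  refine ⟨kj, hmono, (a : H), ?_, ?_, ?_⟩
  · intro y
    exact hφlim.inner tendsto_const_nhds
  · rw [hfix]
    exact tendsto_iff_norm_sub_tendsto_zero.mp hφlim
  · rw [hfix]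
    have hn : Tendsto (fun j => ‖φ (kj j)‖) atTop (nhds ‖(a : H)‖) := hφlim.norm
    have : Tendsto (fun _ : ℕ => (1 : ℝ)) atTop (nhds ‖(a : H)‖) := by
      simpa [hφnorm] using hn
    exact (tendsto_nhds_unique tendsto_const_nhds this).symm
end
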